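/- For a = 1, the elephant polynomial R_n equals the n-th Chebyshev polynomial of the first kind: R_n(cos t) = cos(n t) for all real t and all n ≥ 1. -/

import Mathlib

/-!
For `a = 1` the elephant recursion is the Chebyshev recurrence in disguise: by Chebyshev's
differential relation `(1 - X²) T'ₙ₊₁ = (n + 1) (Tₙ - X Tₙ₊₁)` the correction term equals
`Tₙ - X Tₙ₊₁`, so the recursion produces `2 X Tₙ₊₁ - Tₙ = Tₙ₊₂`. Evaluating at `cos t` then
gives `cos (n t)`.
-/

open Polynomial

/-- The elephant polynomials: `R a 1 = X` and
`R a (n+1) = X * R a n - (a/n) * (1 - X^2) * (R a n)'` for `n ≥ 1`. -/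
noncomputable def elephantR (a : ℝ) : ℕ → Polynomial ℝ
  | 0 => 1
  | 1 => X
  | n + 2 => X * elephantR a (n + 1) -
      C (a / ((n : ℝ) + 1)) * ((1 - X ^ 2) * (elephantR a (n + 1)).derivative)

namespace Polynomial.Chebyshev

-- Inside this namespace a bare `C` would mean the Chebyshev polynomials `Chebyshev.C`.
theorem T_add_two_eq_X_mul_T_sub_derivative {K : Type*} [Field K] [CharZero K] (n : ℕ) :
    T K ((n + 2 : ℕ) : ℤ) = X * T K ((n + 1 : ℕ) : ℤ) -
      Polynomial.C (1 / ((n : K) + 1)) * ((1 - X ^ 2) * derivative (T K ((n + 1 : ℕ) : ℤ))) := by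
  have hdiff : (1 - X ^ 2) * derivative (T K ((n : ℤ) + 1)) =
      Polynomial.C ((n : K) + 1) * (T K n - X * T K ((n : ℤ) + 1)) := by
    simpa using one_sub_X_sq_mul_derivative_T_eq_poly_in_T (R := K) (n : ℤ)
  have hn : (n : K) + 1 ≠ 0 := n.cast_add_one_ne_zero
  push_cast
  rw [hdiff, ← mul_assoc, ← Polynomial.C_mul, one_div, inv_mul_cancel₀ hn, Polynomial.C_1, one_mul,
    T_add_two]
  ring

end Polynomial.Chebyshev

theorem elephantR_one_eq_T : ∀ n : ℕ, elephantR 1 n = Chebyshev.T ℝ n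
  | 0 => by simp [elephantR]
  | 1 => by simp [elephantR]
  | n + 2 => by
    rw [elephantR, elephantR_one_eq_T (n + 1),
      Chebyshev.T_add_two_eq_X_mul_T_sub_derivative]

theorem stmt_5 (n : ℕ) :
    elephantR 1 n = Polynomial.Chebyshev.T ℝ n ∧
    ∀ t : ℝ, (elephantR 1 n).eval (Real.cos t) = Real.cos (n * t) := by
  refine ⟨elephantR_one_eq_T n, fun t => ?_⟩
  rw [elephantR_one_eq_T, Chebyshev.T_real_cos]
  norm_cast
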